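/- arXiv:1101.1490 — 2 statements merged into one kernel-verified Lean document; each statement's English description precedes it below -/
import Mathlib

section
/- Let φ be the morphism φ(A) = A^p B, φ(B) = A^q with p ≥ q > 1, and U_n = |φ^n(A)|. Define w^(N) = B·φ(A^{q-1})·φ^3(A^{q-1})⋯φ^{2N-1}(A^{q-1}) and v^(N) = φ(w^(N)). Then for all j ≥ 0: U_{2j} ≤ |v^(j)| < U_{2j+1} ≤ |w^(j+1)| < U_{2j+2}. -/
/-- Number of occurrences of the letter `A` (encoded as `false`). -/
def countA (w : List Bool) : ℕ := w.count false

/-- Number of occurrences of the letter `B` (encoded as `true`). -/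
def countB (w : List Bool) : ℕ := w.count true

/-- Extension of a morphism (given on letters) to finite words. -/
def applyM (φ : Bool → List Bool) (w : List Bool) : List Bool := (w.map φ).flatten

/-- `w` is a factor of the infinite word `u`. -/
def IsFactor (u : ℕ → Bool) (w : List Bool) : Prop :=
  ∃ i, w = (List.range w.length).map (fun j => u (i + j))

/-- The prefix of length `n` of the infinite word `u`. -/
def prefWord (u : ℕ → Bool) (n : ℕ) : List Bool := (List.range n).map u

/-- The finite word `w` is a prefix of the infinite word `u`. -/
def IsPrefixOf (w : List Bool) (u : ℕ → Bool) : Prop := w = prefWord u w.length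

/-- Abelian complexity: number of Parikh vectors of factors of length `n`. -/
noncomputable def AC (u : ℕ → Bool) (n : ℕ) : ℕ :=
  Set.ncard {P : ℕ × ℕ | ∃ w, IsFactor u w ∧ w.length = n ∧ P = (countA w, countB w)}

/-- `n`-fold iterate of the morphism `φ` applied to the letter `a`. -/
def iterW (φ : Bool → List Bool) (n : ℕ) (a : Bool) : List Bool := (applyM φ)^[n] [a]

/-- The morphism `A ↦ AᵖB, B ↦ A^q` (simple Parry case). -/
def simpleM (p q : ℕ) : Bool → List Bool
  | false => List.replicate p false ++ [true]
  | true  => List.replicate q false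

/-- The morphism `A ↦ AᵖB, B ↦ A^qB` (non-simple Parry case). -/
def nonsimpleM (p q : ℕ) : Bool → List Bool
  | false => List.replicate p false ++ [true]
  | true  => List.replicate q false ++ [true]

/-- Greedy digits `(d_N, …, d_0)` of `x` in the base given by `U`
    (assuming `U 0 = 1`): `d_j = ⌊x_j / U_j⌋`, `x_{j-1} = x_j mod U_j`. -/
def gdigits (U : ℕ → ℕ) : ℕ → ℕ → List ℕ
  | 0, x => [x]
  | j+1, x => x / U (j+1) :: gdigits U j (x % U (j+1))

/-- The digit `d_j` of the normal `U`-representation `(d_N, …, d_0)` of `n`. -/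
def dig (U : ℕ → ℕ) (N n j : ℕ) : ℕ := (gdigits U N n).getD (N - j) 0

/-- The words `w⁽ⁿ⁾` of the non-simple Parry case: `w⁽⁰⁾ = B`, `w⁽ⁿ⁾ = B·φ(w⁽ⁿ⁻¹⁾)`. -/
def wNon (φ : Bool → List Bool) : ℕ → List Bool
  | 0 => [true]
  | n+1 => true :: applyM φ (wNon φ n)

/-- The words `w⁽ᴺ⁾ = B·φ(A^{q-1})·φ³(A^{q-1})⋯φ^{2N-1}(A^{q-1})` of the simple Parry case. -/
def wSim (φ : Bool → List Bool) (q : ℕ) (N : ℕ) : List Bool :=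
  true :: ((List.range N).map
    (fun k => (applyM φ)^[2*k+1] (List.replicate (q-1) false))).flatten

/-!
Passing from `w⁽ʲ⁾` to `w⁽ʲ⁺¹⁾` appends `φ^{2j+1}(A^{q-1})`, of length `(q-1)·U_{2j+1}`; applying
`φ`, passing from `v⁽ʲ⁾` to `v⁽ʲ⁺¹⁾` appends a word of length `(q-1)·U_{2j+2}`. The bounds then
propagate by a two-step induction: if `s < U_{n+1}`, then
`U_{n+2} ≤ s + (q-1)·U_{n+2} < p·U_{n+2} + q·U_{n+1} = U_{n+3}`, since `q ≥ 2` and `q - 1 ≤ p`.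
-/

section Morphism

variable (φ : Bool → List Bool)

lemma applyM_append (a b : List Bool) :
    applyM φ (a ++ b) = applyM φ a ++ applyM φ b := by
  simp [applyM]

lemma applyM_singleton (a : Bool) : applyM φ [a] = φ a := by
  simp [applyM]

lemma iterate_applyM_append (n : ℕ) (a b : List Bool) :
    (applyM φ)^[n] (a ++ b) = (applyM φ)^[n] a ++ (applyM φ)^[n] b := by
  induction n generalizing a b with
  | zero => rfl
  | succ n ih => simp only [Function.iterate_succ_apply, applyM_append, ih]

lemma iterate_applyM_nil (n : ℕ) : (applyM φ)^[n] [] = [] := by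
  simpa using iterate_applyM_append φ n [] []

lemma length_iterW_zero (a : Bool) : (iterW φ 0 a).length = 1 := rfl

lemma length_iterate_applyM_replicate (n m : ℕ) (c : Bool) :
    ((applyM φ)^[n] (List.replicate m c)).length = m * (iterW φ n c).length := by
  induction m with
  | zero => simp [iterate_applyM_nil]
  | succ m ih =>
    rw [List.replicate_succ, ← List.singleton_append, iterate_applyM_append,
      List.length_append, ih, iterW]
    ring

lemma wSim_succ (q N : ℕ) :
    wSim φ q (N + 1) = wSim φ q N ++ (applyM φ)^[2 * N + 1] (List.replicate (q - 1) false) := by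
  simp [wSim, List.range_succ]

lemma length_wSim_zero (q : ℕ) : (wSim φ q 0).length = 1 := rfl

lemma length_wSim_succ (q N : ℕ) :
    (wSim φ q (N + 1)).length
      = (wSim φ q N).length + (q - 1) * (iterW φ (2 * N + 1) false).length := by
  rw [wSim_succ, List.length_append, length_iterate_applyM_replicate]

lemma length_applyM_wSim_succ (q N : ℕ) :
    (applyM φ (wSim φ q (N + 1))).length
      = (applyM φ (wSim φ q N)).length + (q - 1) * (iterW φ (2 * N + 2) false).length := by
  rw [wSim_succ, applyM_append, List.length_append, ← Function.iterate_succ_apply' (applyM φ),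
    length_iterate_applyM_replicate]

end Morphism

section SimpleParry

variable (p q : ℕ)

lemma length_iterW_simpleM_true_succ (n : ℕ) :
    (iterW (simpleM p q) (n + 1) true).length = q * (iterW (simpleM p q) n false).length := by
  rw [iterW, Function.iterate_succ_apply, applyM_singleton]
  exact length_iterate_applyM_replicate _ n q false

lemma length_iterW_simpleM_false_succ (n : ℕ) :
    (iterW (simpleM p q) (n + 1) false).length
      = p * (iterW (simpleM p q) n false).length + (iterW (simpleM p q) n true).length := by
  rw [iterW, Function.iterate_succ_apply, applyM_singleton]
  rw [simpleM, iterate_applyM_append, List.length_append, length_iterate_applyM_replicate]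
  rfl

lemma length_iterW_simpleM_one : (iterW (simpleM p q) 1 false).length = p + 1 := by
  rw [length_iterW_simpleM_false_succ, length_iterW_zero, length_iterW_zero, mul_one]

lemma length_iterW_simpleM_add_two (n : ℕ) :
    (iterW (simpleM p q) (n + 2) false).length
      = p * (iterW (simpleM p q) (n + 1) false).length
        + q * (iterW (simpleM p q) n false).length := by
  rw [length_iterW_simpleM_false_succ, length_iterW_simpleM_true_succ]

lemma length_applyM_wSim_simpleM_zero :
    (applyM (simpleM p q) (wSim (simpleM p q) q 0)).length = q := by
  simp [wSim, applyM, simpleM]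

end SimpleParry

lemma interlace_step {p q s a b : ℕ} (hq : 1 < q) (hpq : q ≤ p + 1) (hs : s < a) :
    b ≤ s + (q - 1) * b ∧ s + (q - 1) * b < p * b + q * a := by
  have hb : b ≤ (q - 1) * b := Nat.le_mul_of_pos_left b (by omega)
  have hqb : (q - 1) * b ≤ p * b := Nat.mul_le_mul_right b (by omega)
  have hqa : a ≤ q * a := Nat.le_mul_of_pos_left a (by omega)
  omega

lemma interlace_of_recurrence {p q : ℕ} (hq : 1 < q) (hpq : q ≤ p) {U V W : ℕ → ℕ}
    (hU0 : U 0 = 1) (hU1 : U 1 = p + 1) (hU : ∀ n, U (n + 2) = p * U (n + 1) + q * U n)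
    (hV0 : V 0 = q) (hV : ∀ j, V (j + 1) = V j + (q - 1) * U (2 * j + 2))
    (hW0 : W 0 = 1) (hW : ∀ j, W (j + 1) = W j + (q - 1) * U (2 * j + 1)) (j : ℕ) :
    U (2 * j) ≤ V j ∧ V j < U (2 * j + 1) ∧
      U (2 * j + 1) ≤ W (j + 1) ∧ W (j + 1) < U (2 * j + 2) := by
  induction j with
  | zero =>
    have hW1 : W 1 = 1 + (q - 1) * (p + 1) := by rw [hW, hW0, hU1]
    have hU2 : U 2 = p * (p + 1) + q := by rw [hU, hU1, hU0, mul_one]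
    have hqp : (q - 1) * (p + 1) < p * (p + 1) := Nat.mul_lt_mul_of_pos_right (by omega) (by omega)
    have hp1 : p + 1 ≤ (q - 1) * (p + 1) := Nat.le_mul_of_pos_left _ (by omega)
    simp only [Nat.mul_zero, Nat.zero_add, hU0, hV0, hU1, hW1, hU2]
    omega
  | succ j ih =>
    obtain ⟨-, hVlt, -, hWlt⟩ := ih
    have hV' : V (j + 1) = V j + (q - 1) * U (2 * j + 2) := hV j
    have hW' : W (j + 2) = W (j + 1) + (q - 1) * U (2 * j + 3) := hW (j + 1)
    have hU3 : U (2 * j + 3) = p * U (2 * j + 2) + q * U (2 * j + 1) := hU (2 * j + 1)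
    have hU4 : U (2 * j + 4) = p * U (2 * j + 3) + q * U (2 * j + 2) := hU (2 * j + 2)
    have hVstep := interlace_step (p := p) (b := U (2 * j + 2)) hq (by omega) hVlt
    have hWstep := interlace_step (p := p) (b := U (2 * j + 3)) hq (by omega) hWlt
    show U (2 * j + 2) ≤ V (j + 1) ∧ V (j + 1) < U (2 * j + 3) ∧
      U (2 * j + 3) ≤ W (j + 2) ∧ W (j + 2) < U (2 * j + 4)
    omega

/-- `U_{2j} ≤ |v⁽ʲ⁾| < U_{2j+1} ≤ |w⁽ʲ⁺¹⁾| < U_{2j+2}` (simple case). -/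
theorem stmt13 (p q : ℕ) (hq : 1 < q) (hpq : q ≤ p)
    (φ : Bool → List Bool) (hφ : φ = simpleM p q)
    (U : ℕ → ℕ) (hU : ∀ m, U m = (iterW φ m false).length)
    (j : ℕ) :
    U (2*j) ≤ (applyM φ (wSim φ q j)).length ∧
    (applyM φ (wSim φ q j)).length < U (2*j+1) ∧
    U (2*j+1) ≤ (wSim φ q (j+1)).length ∧
    (wSim φ q (j+1)).length < U (2*j+2) := by
  subst hφ
  refine interlace_of_recurrence hq hpq ?_ ?_ ?_
    (V := fun j => (applyM (simpleM p q) (wSim (simpleM p q) q j)).length)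
    (length_applyM_wSim_simpleM_zero p q) ?_
    (W := fun j => (wSim (simpleM p q) q j).length) (length_wSim_zero _ q) ?_ j
  · rw [hU, length_iterW_zero]
  · rw [hU, length_iterW_simpleM_one]
  · intro n
    simp only [hU, length_iterW_simpleM_add_two]
  · intro j
    rw [length_applyM_wSim_succ, hU]
  · intro j
    rw [length_wSim_succ, hU]
end

section
/- Let φ be the morphism φ(A) = A^p B, φ(B) = A^q B with p > q ≥ 1, let u_β be its fixed point, and let U_n = |φ^n(A)|. Define w^(0) = B, w^(n) = B·φ(w^(n-1)), and w = lim w^(n). Fix n ∈ ℕ and choose k with n ≤ |w^(k)|. If the normal U-representation of U_{k+1} − n is (e_k, e_{k-1}, …, e_1, e_0), then the prefix ŵ of w of length n satisfies |ŵ|_B = U_k − Σ_{j=1}^{k} e_j U_{j-1}. -/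
/-!
Write `X_m = φ^m(A)` and `Y_m = φ^m(B)`, so that `X_{m+1} = X_m^p Y_m`, `Y_{m+1} = X_m^q Y_m`
and `|Y_m| ≤ |X_m|`. Cutting a prefix of `X_{m+1}` or `Y_{m+1}` greedily into copies of `X_m`
shows by induction that the `B`-count of a prefix of length `r` is the sum of the greedy digits
of `r` weighted by `|X_j|_B = U_{j-1}`. On the other hand `w⁽ᵏ⁾` is a palindrome and a suffix of
`X_{k+1}`, so its prefix of length `n` has the `B`-count of the suffix of length `n` of `X_{k+1}`,
which is `|X_{k+1}|_B = U_k` minus the `B`-count of the prefix of length `U_{k+1} - n`.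
-/

/-- Weighted sum of the greedy digits of `x` on the levels `m - 1, …, 0` of the base `U`. -/
def greedySum (U c : ℕ → ℕ) : ℕ → ℕ → ℕ
  | 0, _ => 0
  | m + 1, x => x / U m * c m + greedySum U c m (x % U m)

lemma dig_succ_self (U : ℕ → ℕ) (N x : ℕ) : dig U (N + 1) x (N + 1) = x / U (N + 1) := by
  simp [dig, gdigits]

lemma dig_succ_of_le (U : ℕ → ℕ) {N j : ℕ} (x : ℕ) (hj : j ≤ N) :
    dig U (N + 1) x j = dig U N (x % U (N + 1)) j := by
  simp [dig, gdigits, show N + 1 - j = N - j + 1 by omega]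

lemma greedySum_succ_eq_sum_dig (U c : ℕ → ℕ) (hc : c 0 = 0) (N x : ℕ) :
    greedySum U c (N + 1) x = ∑ j ∈ Finset.Icc 1 N, dig U N x j * c j := by
  induction N generalizing x with
  | zero => simp [greedySum, hc]
  | succ N ih =>
    rw [greedySum, ih, Finset.sum_Icc_succ_top (by omega), dig_succ_self, add_comm]
    congr 1
    exact Finset.sum_congr rfl fun j hj => by
      rw [dig_succ_of_le U x (Finset.mem_Icc.mp hj).2]

lemma count_take_flatten_replicate_append {α : Type*} [BEq α] (a : α) {X Y : List α}
    {g : ℕ → ℕ} (hX : ∀ r < X.length, (X.take r).count a = g r)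
    (hY : ∀ r < Y.length, (Y.take r).count a = g r) (hYX : Y.length ≤ X.length) (N : ℕ) :
    ∀ r < N * X.length + Y.length,
      (((List.replicate N X).flatten ++ Y).take r).count a
        = r / X.length * X.count a + g (r % X.length) := by
  induction N with
  | zero =>
    intro r hr
    rw [zero_mul, zero_add] at hr
    simp [Nat.div_eq_of_lt (hr.trans_le hYX), Nat.mod_eq_of_lt (hr.trans_le hYX), hY r hr]
  | succ N ih =>
    intro r hr
    rw [List.replicate_succ, List.flatten_cons, List.append_assoc]
    rcases lt_or_ge r X.length with hrX | hrX
    · simp [List.take_append_of_le_length hrX.le, Nat.div_eq_of_lt hrX, Nat.mod_eq_of_lt hrX,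
        hX r hrX]
    · obtain ⟨s, rfl⟩ := Nat.exists_eq_add_of_le hrX
      have hs : s < N * X.length + Y.length := by rw [add_mul, one_mul] at hr; omega
      have hX0 : 0 < X.length := Nat.pos_of_ne_zero fun h => by
        rw [h] at hYX hs; omega
      rw [List.take_length_add_append, List.count_append, ih s hs,
        Nat.add_div_left _ hX0, Nat.add_mod_left]
      ring

lemma applyM_eq_flatMap (φ : Bool → List Bool) (w : List Bool) : applyM φ w = w.flatMap φ :=
  List.flatMap_def.symm

lemma iterW_succ' (φ : Bool → List Bool) (m : ℕ) (a : Bool) :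
    iterW φ (m + 1) a = applyM φ (iterW φ m a) :=
  Function.iterate_succ_apply' _ _ _

lemma iterate_applyM (φ : Bool → List Bool) (m : ℕ) (w : List Bool) :
    (applyM φ)^[m] w = applyM (iterW φ m) w := by
  induction m with
  | zero => simp [applyM_eq_flatMap, show iterW φ 0 = fun a => [a] from rfl]
  | succ m ih =>
    rw [Function.iterate_succ_apply', ih]
    simp only [applyM_eq_flatMap, List.flatMap_assoc]
    congr 1
    funext a
    rw [iterW_succ', applyM_eq_flatMap]

lemma iterW_succ (φ : Bool → List Bool) (m : ℕ) (a : Bool) :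
    iterW φ (m + 1) a = applyM (iterW φ m) (φ a) := by
  rw [iterW, Function.iterate_succ_apply, iterate_applyM]
  simp [applyM_eq_flatMap]

lemma prefWord_eq_take {w : List Bool} {u : ℕ → Bool} (hw : IsPrefixOf w u) {n : ℕ}
    (hn : n ≤ w.length) : prefWord u n = w.take n := by
  conv_rhs => rw [hw]
  rw [prefWord, prefWord, ← List.map_take, List.take_range, min_eq_left hn]

lemma count_take_add_count_take_of_palindrome {α : Type*} [BEq α] (a : α) {W X : List α}
    (hW : W.Palindrome) (hWX : W <:+ X) {n : ℕ} (hn : n ≤ W.length) :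
    (W.take n).count a + (X.take (X.length - n)).count a = X.count a := by
  obtain ⟨u, rfl⟩ := hWX
  have hflip : (W.take n).count a = (W.drop (W.length - n)).count a := by
    conv_lhs => rw [← hW.reverse_eq]
    rw [List.take_reverse, List.count_reverse]
  have hsplit := congrArg (List.count a) (List.take_append_drop (W.length - n) W)
  rw [List.count_append] at hsplit
  rw [hflip, List.length_append, Nat.add_sub_assoc hn, List.take_length_add_append,
    List.count_append, List.count_append]
  omega

section NonsimpleParry

variable {p q : ℕ}

lemma nonsimpleM_eq (a : Bool) :
    nonsimpleM p q a = List.replicate (bif a then q else p) false ++ [true] := by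
  cases a <;> rfl

lemma iterW_nonsimpleM_succ (m : ℕ) (a : Bool) :
    iterW (nonsimpleM p q) (m + 1) a =
      (List.replicate (bif a then q else p) (iterW (nonsimpleM p q) m false)).flatten
        ++ iterW (nonsimpleM p q) m true := by
  rw [iterW_succ, nonsimpleM_eq, applyM_eq_flatMap, List.flatMap_append, List.flatMap_replicate]
  simp

lemma length_iterW_nonsimpleM_succ (m : ℕ) (a : Bool) :
    (iterW (nonsimpleM p q) (m + 1) a).length =
      (bif a then q else p) * (iterW (nonsimpleM p q) m false).length
        + (iterW (nonsimpleM p q) m true).length := by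
  rw [iterW_nonsimpleM_succ]
  simp

lemma length_iterW_nonsimpleM_true_le (hqp : q ≤ p) (m : ℕ) :
    (iterW (nonsimpleM p q) m true).length ≤ (iterW (nonsimpleM p q) m false).length := by
  cases m with
  | zero => rfl
  | succ m =>
    rw [length_iterW_nonsimpleM_succ, length_iterW_nonsimpleM_succ]
    simpa using Nat.mul_le_mul_right _ hqp

lemma countB_applyM_nonsimpleM (w : List Bool) :
    countB (applyM (nonsimpleM p q) w) = w.length := by
  induction w with
  | nil => rfl
  | cons a w ih =>
    simp only [countB, applyM_eq_flatMap] at ih ⊢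
    rw [List.flatMap_cons, List.count_append, ih, nonsimpleM_eq]
    simp [add_comm, List.count_replicate]

lemma countB_take_iterW_nonsimpleM (hqp : q ≤ p) (m : ℕ) (a : Bool) {r : ℕ}
    (hr : r < (iterW (nonsimpleM p q) m a).length) :
    countB ((iterW (nonsimpleM p q) m a).take r) =
      greedySum (fun j => (iterW (nonsimpleM p q) j false).length)
        (fun j => countB (iterW (nonsimpleM p q) j false)) m r := by
  induction m generalizing a r with
  | zero =>
    obtain rfl : r = 0 := by simpa [iterW] using hr
    rfl
  | succ m ih =>
    rw [length_iterW_nonsimpleM_succ] at hr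
    rw [iterW_nonsimpleM_succ]
    exact count_take_flatten_replicate_append true (fun r hr => ih false hr)
      (fun r hr => ih true hr) (length_iterW_nonsimpleM_true_le hqp m) _ r hr

lemma countB_iterW_nonsimpleM_succ (m : ℕ) (a : Bool) :
    countB (iterW (nonsimpleM p q) (m + 1) a) = (iterW (nonsimpleM p q) m a).length := by
  rw [iterW_succ', countB_applyM_nonsimpleM]

lemma countB_take_iterW_nonsimpleM_succ (hqp : q ≤ p) (k : ℕ) (a : Bool) {r : ℕ}
    (hr : r < (iterW (nonsimpleM p q) (k + 1) a).length) :
    countB ((iterW (nonsimpleM p q) (k + 1) a).take r) =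
      ∑ j ∈ Finset.Icc 1 k, dig (fun m => (iterW (nonsimpleM p q) m false).length) k r j
        * (iterW (nonsimpleM p q) (j - 1) false).length := by
  rw [countB_take_iterW_nonsimpleM hqp _ _ hr, greedySum_succ_eq_sum_dig _ _ rfl]
  refine Finset.sum_congr rfl fun j hj => ?_
  obtain ⟨i, rfl⟩ := Nat.exists_eq_add_of_lt (Finset.mem_Icc.mp hj).1
  rw [zero_add, countB_iterW_nonsimpleM_succ, Nat.add_sub_cancel]

lemma reverse_nonsimpleM_append (a : Bool) :
    (nonsimpleM p q a).reverse ++ [true] = true :: nonsimpleM p q a := by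
  simp [nonsimpleM_eq, List.reverse_replicate]

lemma reverse_applyM_nonsimpleM_append (w : List Bool) :
    (applyM (nonsimpleM p q) w).reverse ++ [true] = true :: applyM (nonsimpleM p q) w.reverse := by
  induction w with
  | nil => rfl
  | cons a w ih =>
    simp only [applyM_eq_flatMap] at ih ⊢
    rw [List.flatMap_cons, List.reverse_append, List.append_assoc, reverse_nonsimpleM_append,
      List.append_cons, ih, List.reverse_cons, List.flatMap_append]
    simp

lemma wNon_nonsimpleM_palindrome (k : ℕ) : (wNon (nonsimpleM p q) k).Palindrome := by
  refine .of_reverse_eq ?_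
  induction k with
  | zero => rfl
  | succ k ih =>
    rw [wNon, List.reverse_cons, reverse_applyM_nonsimpleM_append, ih]

lemma iterW_nonsimpleM_succ_eq_append_wNon (hp : 0 < p) (k : ℕ) :
    ∃ u, iterW (nonsimpleM p q) (k + 1) false = u ++ false :: wNon (nonsimpleM p q) k := by
  have hA : nonsimpleM p q false = List.replicate (p - 1) false ++ [false, true] := by
    obtain ⟨p, rfl⟩ := Nat.exists_eq_add_of_lt hp
    simp [nonsimpleM, List.replicate_succ']
  induction k with
  | zero => exact ⟨List.replicate (p - 1) false, by simp [iterW, applyM, hA, wNon]⟩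
  | succ k ih =>
    obtain ⟨u, hu⟩ := ih
    refine ⟨applyM (nonsimpleM p q) u ++ List.replicate (p - 1) false, ?_⟩
    rw [iterW_succ', hu]
    simp [applyM, hA, wNon]

end NonsimpleParry

theorem stmt15_general (p q : ℕ) (hpq : q < p)
    (φ : Bool → List Bool) (hφ : φ = nonsimpleM p q)
    (U : ℕ → ℕ) (hU : ∀ m, U m = (iterW φ m false).length)
    (winf : ℕ → Bool) (hwinf : ∀ m, IsPrefixOf (wNon φ m) winf)
    (n k : ℕ) (hn : 0 < n) (hk : n ≤ (wNon φ k).length) :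
    countB (prefWord winf n) =
      U k - ∑ j ∈ Finset.Icc 1 k, dig U k (U (k+1) - n) j * U (j-1) := by
  subst hφ
  obtain rfl : U = fun m => (iterW (nonsimpleM p q) m false).length := funext hU
  obtain ⟨u, hX⟩ := iterW_nonsimpleM_succ_eq_append_wNon (q := q) (Nat.zero_lt_of_lt hpq) k
  have hsuffix : wNon (nonsimpleM p q) k <:+ iterW (nonsimpleM p q) (k + 1) false :=
    ⟨u ++ [false], by simp [hX]⟩
  have hsplit := count_take_add_count_take_of_palindrome true
    (wNon_nonsimpleM_palindrome k) hsuffix hk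
  have hprefix := countB_take_iterW_nonsimpleM_succ hpq.le k false
    (r := (iterW (nonsimpleM p q) (k + 1) false).length - n)
    (by have := hsuffix.length_le; omega)
  have htotal := countB_iterW_nonsimpleM_succ (p := p) (q := q) k false
  rw [prefWord_eq_take (hwinf k) hk]
  simp only [countB] at hprefix htotal ⊢
  omega

/-- the `B`-count of the length-`n` prefix `ŵ` of `w = lim w⁽ⁿ⁾`
(non-simple case): `|ŵ|_B = U_k − Σ_{j=1}^{k} e_j U_{j-1}`, where `(e_k, …, e_0)` is the
normal `U`-representation of `U_{k+1} − n`. -/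
theorem stmt15 (p q : ℕ) (hq : 1 ≤ q) (hpq : q < p)
    (φ : Bool → List Bool) (hφ : φ = nonsimpleM p q)
    (U : ℕ → ℕ) (hU : ∀ m, U m = (iterW φ m false).length)
    (winf : ℕ → Bool) (hwinf : ∀ m, IsPrefixOf (wNon φ m) winf)
    (n k : ℕ) (hn : 0 < n) (hk : n ≤ (wNon φ k).length) :
    countB (prefWord winf n) =
      U k - ∑ j ∈ Finset.Icc 1 k, dig U k (U (k+1) - n) j * U (j-1) :=
  stmt15_general p q hpq φ hφ U hU winf hwinf n k hn hk
end
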